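/- arXiv:2101.06240 — 3 statements merged into one kernel-verified Lean document; each statement's English description precedes it below -/
import Mathlib

section
/- For all real q with 0 ≤ q < 1 and all natural numbers m ≥ 1, the product ∏_{i=1}^{m} (1 - q^{(i+1)/2}) is at least 1 - q^{1/2} - q - q^{3/2} + q^{(m+2)/2}. -/
/-! With `t = √q` the claim becomes the polynomial inequality
`1 - t - t² - t³ + t^(m+2) ≤ ∏ (1 - t^(i+1))`, proved by induction on `m`: multiplying the bound
for `m` by `1 - t^(m+2)` loses `t^(m+2) (t² + t³ - t^(m+2)) ≥ 0` against the bound for `m + 1`. -/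

theorem one_sub_sub_sub_add_pow_le_prod_one_sub_pow {t : ℝ} (ht0 : 0 ≤ t) (ht1 : t ≤ 1) (m : ℕ) :
    1 - t - t ^ 2 - t ^ 3 + t ^ (m + 2) ≤ ∏ i ∈ Finset.Icc 1 m, (1 - t ^ (i + 1)) := by
  induction m with
  | zero =>
    simp only [zero_add, Finset.Icc_eq_empty_of_lt zero_lt_one, Finset.prod_empty]
    nlinarith [pow_nonneg ht0 3]
  | succ n ih =>
    rw [Finset.prod_Icc_succ_top (by omega)]
    have hu0 : 0 ≤ t ^ (n + 2) := pow_nonneg ht0 _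
    have hu1 : t ^ (n + 2) ≤ 1 := pow_le_one₀ ht0 ht1
    have hu2 : t ^ (n + 2) ≤ t ^ 2 := pow_le_pow_of_le_one ht0 ht1 (by omega)
    calc 1 - t - t ^ 2 - t ^ 3 + t ^ (n + 1 + 2)
        ≤ (1 - t - t ^ 2 - t ^ 3 + t ^ (n + 2)) * (1 - t ^ (n + 2)) := by
          have hpow : t ^ (n + 1 + 2) = t ^ (n + 2) * t := by ring
          nlinarith [mul_nonneg hu0 (pow_nonneg ht0 3), mul_le_mul_of_nonneg_left hu2 hu0]
      _ ≤ (∏ i ∈ Finset.Icc 1 n, (1 - t ^ (i + 1))) * (1 - t ^ (n + 1 + 1)) :=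
          mul_le_mul_of_nonneg_right ih (sub_nonneg.mpr hu1)

theorem Real.rpow_natCast_div_two {q : ℝ} (hq : 0 ≤ q) (n : ℕ) : q ^ ((n : ℝ) / 2) = √q ^ n := by
  rw [Real.sqrt_eq_rpow, ← Real.rpow_natCast, ← Real.rpow_mul hq]
  ring_nf

theorem prod_lower_bound_general (q : ℝ) (hq0 : 0 ≤ q) (hq1 : q < 1) (m : ℕ) :
    1 - q ^ ((1:ℝ)/2) - q - q ^ ((3:ℝ)/2) + q ^ (((m:ℝ)+2)/2) ≤
      ∏ i ∈ Finset.Icc 1 m, (1 - q ^ (((i:ℝ)+1)/2)) := by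
  have h := one_sub_sub_sub_add_pow_le_prod_one_sub_pow (Real.sqrt_nonneg q)
    (Real.sqrt_le_one.mpr hq1.le) m
  have h3 : q ^ ((3 : ℝ) / 2) = √q ^ 3 := mod_cast Real.rpow_natCast_div_two hq0 3
  have hm2 : q ^ (((m : ℝ) + 2) / 2) = √q ^ (m + 2) :=
    mod_cast Real.rpow_natCast_div_two hq0 (m + 2)
  have hi (i : ℕ) : q ^ (((i : ℝ) + 1) / 2) = √q ^ (i + 1) :=
    mod_cast Real.rpow_natCast_div_two hq0 (i + 1)
  simp_rw [← Real.sqrt_eq_rpow, h3, hm2, hi]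
  rwa [Real.sq_sqrt hq0] at h

theorem prod_lower_bound (q : ℝ) (hq0 : 0 ≤ q) (hq1 : q < 1) (m : ℕ) (hm : 1 ≤ m) :
    1 - q ^ ((1:ℝ)/2) - q - q ^ ((3:ℝ)/2) + q ^ (((m:ℝ)+2)/2) ≤
      ∏ i ∈ Finset.Icc 1 m, (1 - q ^ (((i:ℝ)+1)/2)) :=
  prod_lower_bound_general q hq0 hq1 m
end

section
/- For all real q with 0 ≤ q < 1 and all natural numbers m ≥ 1, the product ∏_{i=1}^{m} (1 - q^{(i+1)/2}) is at least 1 - 3·q^{1/2}. -/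
/-!
Put `r = q ^ (1/2)`, so the factors are `1 - r ^ (i + 1)`. If `r ≥ 1/3` the left side is
nonpositive while every factor is nonnegative. Otherwise the Weierstrass product inequality
`∏ (1 - aᵢ) ≥ 1 - ∑ aᵢ` and the geometric series bound `∑ r ^ (i + 1) ≤ r ^ 2 / (1 - r) ≤ 3 r`
finish the proof.
-/

open Finset

theorem Finset.one_sub_sum_le_prod_one_sub {ι R : Type*} [CommRing R] [LinearOrder R]
    [IsStrictOrderedRing R] (s : Finset ι) {f : ι → R} (h0 : ∀ i ∈ s, 0 ≤ f i)
    (h1 : ∀ i ∈ s, f i ≤ 1) : 1 - ∑ i ∈ s, f i ≤ ∏ i ∈ s, (1 - f i) := by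
  induction s using Finset.cons_induction with
  | empty => simp
  | cons a s ha ih =>
    rw [sum_cons, prod_cons]
    have ih := ih (fun i hi ↦ h0 i (mem_cons_of_mem hi)) (fun i hi ↦ h1 i (mem_cons_of_mem hi))
    have hfa : 0 ≤ 1 - f a := sub_nonneg.2 (h1 a (mem_cons_self a s))
    have hcross : 0 ≤ f a * ∑ i ∈ s, f i :=
      mul_nonneg (h0 a (mem_cons_self a s)) (sum_nonneg fun i hi ↦ h0 i (mem_cons_of_mem hi))
    calc 1 - (f a + ∑ i ∈ s, f i)
        ≤ (1 - f a) * (1 - ∑ i ∈ s, f i) := by nlinarith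
      _ ≤ (1 - f a) * ∏ i ∈ s, (1 - f i) := mul_le_mul_of_nonneg_left ih hfa

theorem sum_Icc_pow_succ_le {K : Type*} [Field K] [LinearOrder K] [IsStrictOrderedRing K]
    {r : K} (hr0 : 0 ≤ r) (hr1 : r < 1) (m : ℕ) :
    ∑ i ∈ Icc 1 m, r ^ (i + 1) ≤ r ^ 2 / (1 - r) := by
  have hshift : ∑ i ∈ Icc 1 m, r ^ (i + 1) = ∑ i ∈ Ico 2 (m + 2), r ^ i := by
    rw [← Finset.Ico_add_one_right_eq_Icc, sum_Ico_add' (fun i ↦ r ^ i)]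
  rw [hshift]
  exact geom_sum_Ico_le_of_lt_one hr0 hr1

theorem prod_lower_bound'_general (q : ℝ) (hq0 : 0 ≤ q) (hq1 : q < 1) (m : ℕ) :
    1 - 3 * q ^ ((1:ℝ)/2) ≤ ∏ i ∈ Finset.Icc 1 m, (1 - q ^ (((i:ℝ)+1)/2)) := by
  set r : ℝ := q ^ ((1:ℝ)/2)
  have hr0 : 0 ≤ r := Real.rpow_nonneg hq0 _
  have hr1 : r < 1 := Real.rpow_lt_one hq0 hq1 (by norm_num)
  have hfactor (i : ℕ) : q ^ (((i:ℝ)+1)/2) = r ^ (i + 1) := by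
    rw [← Real.rpow_natCast, ← Real.rpow_mul hq0]
    push_cast
    ring_nf
  simp only [hfactor]
  have hpow0 : ∀ i ∈ Icc 1 m, 0 ≤ r ^ (i + 1) := fun i _ ↦ pow_nonneg hr0 _
  have hpow1 : ∀ i ∈ Icc 1 m, r ^ (i + 1) ≤ 1 := fun i _ ↦ pow_le_one₀ hr0 hr1.le
  rcases le_or_gt (1/3 : ℝ) r with hr | hr
  · have hprod : 0 ≤ ∏ i ∈ Icc 1 m, (1 - r ^ (i + 1)) :=
      prod_nonneg fun i hi ↦ sub_nonneg.2 (hpow1 i hi)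
    linarith
  · have hgeom : r ^ 2 / (1 - r) ≤ 3 * r := by
      rw [div_le_iff₀ (by linarith)]
      nlinarith
    calc 1 - 3 * r ≤ 1 - ∑ i ∈ Icc 1 m, r ^ (i + 1) := by
          linarith [sum_Icc_pow_succ_le hr0 hr1 m]
      _ ≤ ∏ i ∈ Icc 1 m, (1 - r ^ (i + 1)) := one_sub_sum_le_prod_one_sub _ hpow0 hpow1

theorem prod_lower_bound' (q : ℝ) (hq0 : 0 ≤ q) (hq1 : q < 1) (m : ℕ) (hm : 1 ≤ m) :
    1 - 3 * q ^ ((1:ℝ)/2) ≤ ∏ i ∈ Finset.Icc 1 m, (1 - q ^ (((i:ℝ)+1)/2)) :=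
  prod_lower_bound'_general q hq0 hq1 m
end

section
/- Let G be a finite graph in which some vertex v has 2-neighbourhood type τ₄ (the rooted graph N₄ of the paper: the centre c₁ has three neighbours, one of degree 1 and two of degree 3, each of the degree-3 neighbours having two further leaves). Let u be the neighbour of v of degree 1. Then in G minus the edge uv, no vertex in N_1^G(v) has 2-neighbourhood type τ₄. -/
/-- The set of vertices at distance at most `r` from `v` in `G`. -/
def nball {V : Type*} (G : SimpleGraph V) (r : ℕ) (v : V) : Set V :=
  {u | G.Reachable v u ∧ G.dist v u ≤ r}

lemma mem_nball_self {V : Type*} (G : SimpleGraph V) (r : ℕ) (v : V) : v ∈ nball G r v :=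
  ⟨SimpleGraph.Reachable.refl v, by simp [SimpleGraph.dist_self]⟩

/-- The `r`-neighbourhoods of `w` in `G` and in `H` are isomorphic as rooted graphs. -/
def RootedBallIso {V : Type*} (G H : SimpleGraph V) (r : ℕ) (w : V) : Prop :=
  ∃ φ : (G.induce (nball G r w)) ≃g (H.induce (nball H r w)),
    (φ ⟨w, mem_nball_self G r w⟩ : V) = w

/-- `w` has `r`-neighbourhood type given by the rooted graph `(T, c)`. -/
def HasBallType {V W : Type*} (G : SimpleGraph V) (r : ℕ) (w : V)
    (T : SimpleGraph W) (c : W) : Prop :=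
  ∃ φ : (G.induce (nball G r w)) ≃g (T.induce (nball T r c)),
    (φ ⟨w, mem_nball_self G r w⟩ : W) = c

/-- The rooted tree `N₄` of the paper: centre `0` adjacent to `1, 2, 3`; vertex `1` is a leaf;
vertices `2` and `3` each have two further leaf neighbours. -/
def tau4 : SimpleGraph (Fin 8) :=
  SimpleGraph.fromRel (fun a b =>
    ((a : ℕ), (b : ℕ)) ∈ ({(0,1),(0,2),(0,3),(2,4),(2,5),(3,6),(3,7)} : Set (ℕ × ℕ)))

/-!
A vertex at distance `≤ 1` from a vertex of type `τ₄` has its whole neighbourhood inside the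
2-ball, so its degree is that of a vertex of `τ₄`, namely `1` or `3`. Deleting `uv` therefore
leaves `u` and `v` with degree `0` or `2`. A vertex `w ∈ N₁(v)` has `u` (if `w = u`) or `v`
(otherwise) within distance `1` after the deletion, so `w` cannot have type `τ₄` either.
-/

namespace SimpleGraph

variable {V : Type*} {G : SimpleGraph V}

lemma mem_nball_one_iff {x y : V} : y ∈ nball G 1 x ↔ y = x ∨ G.Adj x y := by
  constructor
  · rintro ⟨hreach, hdist⟩
    rcases Nat.le_one_iff_eq_zero_or_eq_one.mp hdist with h | h
    · exact Or.inl (hreach.dist_eq_zero_iff.mp h).symm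
    · exact Or.inr (dist_eq_one_iff_adj.mp h)
  · rintro (rfl | h)
    · exact mem_nball_self G 1 y
    · exact ⟨h.reachable, (dist_eq_one_iff_adj.mpr h).le⟩

lemma nball_mono {r s : ℕ} (h : r ≤ s) (x : V) : nball G r x ⊆ nball G s x :=
  fun _ hy => ⟨hy.1, hy.2.trans h⟩

lemma mem_nball_succ_of_adj {r : ℕ} {x y z : V} (hy : y ∈ nball G r x) (hyz : G.Adj y z) :
    z ∈ nball G (r + 1) x :=
  ⟨hy.1.trans hyz.reachable, calc
    G.dist x z ≤ G.dist x y + G.dist y z := hy.1.dist_triangle_left z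
    _ = G.dist x y + 1 := by rw [dist_eq_one_iff_adj.mpr hyz]
    _ ≤ r + 1 := by have := hy.2; omega⟩

lemma card_neighborSet_induce_of_neighborSet_subset {s : Set V} {x : V} (hx : x ∈ s)
    (h : G.neighborSet x ⊆ s) :
    Nat.card ((G.induce s).neighborSet ⟨x, hx⟩) = Nat.card (G.neighborSet x) := by
  rw [neighborSet_induce, Nat.card_coe_set_eq, Nat.card_coe_set_eq,
    Set.ncard_preimage_of_injective_subset_range Subtype.val_injective (by simpa using h)]

lemma ncard_neighborSet_deleteEdges_add_one {x y : V} (hxy : G.Adj x y)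
    (hfin : (G.neighborSet x).Finite) :
    ((G.deleteEdges {s(x, y)}).neighborSet x).ncard + 1 = (G.neighborSet x).ncard := by
  have : (G.deleteEdges {s(x, y)}).neighborSet x = G.neighborSet x \ {y} := by
    ext z
    simp [hxy.ne]
  rw [this]
  exact Set.ncard_sdiff_singleton_add_one (s := G.neighborSet x) hxy hfin

end SimpleGraph

open SimpleGraph

lemma HasBallType.exists_card_neighborSet_eq {V W : Type*} {G : SimpleGraph V} {T : SimpleGraph W}
    {r : ℕ} {x : V} {c : W} (h : HasBallType G r x T c) (hT : nball T r c = Set.univ) {y : V}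
    (hy : y ∈ nball G r x) (hsub : G.neighborSet y ⊆ nball G r x) :
    ∃ z, Nat.card (G.neighborSet y) = Nat.card (T.neighborSet z) := by
  obtain ⟨φ, -⟩ := h
  refine ⟨φ ⟨y, hy⟩, ?_⟩
  rw [← card_neighborSet_induce_of_neighborSet_subset hy hsub,
    Nat.card_congr (φ.mapNeighborSet _),
    card_neighborSet_induce_of_neighborSet_subset _ (by simp [hT])]

instance : DecidableRel tau4.Adj := fun a b => by unfold tau4; infer_instance

lemma nball_tau4 : nball tau4 2 0 = Set.univ := by
  refine Set.eq_univ_of_forall fun a => ?_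
  obtain ⟨b, hb, hab⟩ : ∃ b, (b = 0 ∨ tau4.Adj 0 b) ∧ (a = b ∨ tau4.Adj b a) := by
    revert a
    decide
  rcases hab with rfl | hab
  · exact nball_mono one_le_two 0 (mem_nball_one_iff.mpr hb)
  · exact mem_nball_succ_of_adj (mem_nball_one_iff.mpr hb) hab

lemma card_neighborSet_tau4 (a : Fin 8) :
    Nat.card (tau4.neighborSet a) = 1 ∨ Nat.card (tau4.neighborSet a) = 3 := by
  rw [Nat.card_eq_fintype_card, card_neighborSet_eq_degree]
  revert a
  decide

lemma HasBallType.ncard_neighborSet_of_tau4 {V : Type*} {G : SimpleGraph V} {x y : V}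
    (h : HasBallType G 2 x tau4 0) (hy : y ∈ nball G 1 x) :
    (G.neighborSet y).ncard = 1 ∨ (G.neighborSet y).ncard = 3 := by
  obtain ⟨z, hz⟩ := h.exists_card_neighborSet_eq nball_tau4 (nball_mono one_le_two x hy)
    fun _ hyz => mem_nball_succ_of_adj hy hyz
  rw [← Nat.card_coe_set_eq, hz]
  exact card_neighborSet_tau4 z

lemma not_hasBallType_tau4_deleteEdges {V : Type*} {G : SimpleGraph V} {v w x y : V}
    (hv : HasBallType G 2 v tau4 0) (hxy : G.Adj x y) (hx : x ∈ nball G 1 v)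
    (hxw : x ∈ nball (G.deleteEdges {s(x, y)}) 1 w) :
    ¬ HasBallType (G.deleteEdges {s(x, y)}) 2 w tau4 0 := fun hw => by
  have hdeg := hv.ncard_neighborSet_of_tau4 hx
  have hdeg' := hw.ncard_neighborSet_of_tau4 hxw
  have hfin : (G.neighborSet x).Finite := Set.finite_of_ncard_ne_zero (by omega)
  have := ncard_neighborSet_deleteEdges_add_one hxy hfin
  omega

theorem no_tau4_in_ball_after_deletion_general {V : Type*} (G : SimpleGraph V)
    (v u : V) (hv : HasBallType G 2 v tau4 0) (huv : G.Adj u v) :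
    ∀ w ∈ nball G 1 v, ¬ HasBallType (G.deleteEdges {s(u,v)}) 2 w tau4 0 := by
  intro w hw
  by_cases hwu : w = u
  · subst hwu
    exact not_hasBallType_tau4_deleteEdges hv huv (mem_nball_one_iff.mpr (Or.inr huv.symm))
      (mem_nball_self _ 1 w)
  · rw [Sym2.eq_swap]
    refine not_hasBallType_tau4_deleteEdges hv huv.symm (mem_nball_self G 1 v) ?_
    rcases mem_nball_one_iff.mp hw with rfl | hvw
    · exact mem_nball_self _ 1 w
    · exact mem_nball_one_iff.mpr (Or.inr (by simp [hvw.symm, hwu, huv.ne']))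

theorem no_tau4_in_ball_after_deletion {V : Type*} [Fintype V] (G : SimpleGraph V)
    (v u : V) (hv : HasBallType G 2 v tau4 0) (huv : G.Adj u v)
    (hu : (G.neighborSet u).ncard = 1) :
    ∀ w ∈ nball G 1 v, ¬ HasBallType (G.deleteEdges {s(u,v)}) 2 w tau4 0 :=
  no_tau4_in_ball_after_deletion_general G v u hv huv
end
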